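/- Let Ω ⊆ ℝⁿ be a convex set containing 0, let U ⊆ ℝⁿ be an open set containing Ω, and let f : U → ℝⁿ be twice continuously differentiable with f(0) = 0. Let L₂ > 0 satisfy ‖D²f(x)‖ ≤ L₂ for all x ∈ Ω. Let P be a symmetric real n×n matrix with (1/2)(P·Df(0) + Df(0)ᵀ·P) ⪯ −I, and let ε ∈ (0,1) and β > 0 satisfy β ≤ (1 − ε)/(L₂‖P‖). Then for every x ∈ Ω with ‖x‖ < β one has xᵀ P f(x) ≤ −ε‖x‖². -/

import Mathlib

/-!
Along the segment from `0` to `x ∈ Ω`, the bound `‖D²f‖ ≤ L₂` makes `Df` `L₂`-Lipschitz, so the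
mean value inequality gives `‖f x - Df(0) x‖ ≤ L₂ ‖x‖²`. The matrix inequality on `P` says exactly
that `xᵀ P Df(0) x ≤ -‖x‖²`, and by Cauchy–Schwarz the remainder contributes at most
`‖P‖ L₂ ‖x‖ · ‖x‖² ≤ (1 - ε) ‖x‖²` once `‖x‖ < β`.
-/

open Matrix

/-- The ℓ² operator norm of a real matrix, i.e. the norm of the induced
continuous linear map on Euclidean space. -/
noncomputable def opNorm {n : ℕ} (P : Matrix (Fin n) (Fin n) ℝ) : ℝ :=
  ‖Matrix.toEuclideanCLM (𝕜 := ℝ) P‖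

/-- The bilinear pairing `xᵀ P w` on Euclidean space. -/
noncomputable def quadF {n : ℕ} (P : Matrix (Fin n) (Fin n) ℝ)
    (x w : EuclideanSpace ℝ (Fin n)) : ℝ :=
  inner ℝ x (Matrix.toEuclideanLin P w)

/-- The Jacobian matrix `Df(0)` of `f` at the origin:
`(Df(0))_{ij} = ∂f_i/∂x_j (0)`. -/
noncomputable def jacobianAtZero {n : ℕ}
    (f : EuclideanSpace ℝ (Fin n) → EuclideanSpace ℝ (Fin n)) :
    Matrix (Fin n) (Fin n) ℝ :=
  Matrix.of (fun i j => fderiv ℝ f 0 (EuclideanSpace.single j 1) i)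

section Taylor

variable {E F : Type*} [NormedAddCommGroup E] [NormedSpace ℝ E] [NormedAddCommGroup F]
  [NormedSpace ℝ F] {f : E → F} {Ω : Set E} {L : ℝ}

theorem Convex.norm_fderiv_sub_fderiv_le (hΩ : Convex ℝ Ω)
    (hf : ∀ y ∈ Ω, ContDiffAt ℝ 2 f y) (hbound : ∀ y ∈ Ω, ‖iteratedFDeriv ℝ 2 f y‖ ≤ L)
    {a y : E} (ha : a ∈ Ω) (hy : y ∈ Ω) :
    ‖fderiv ℝ f y - fderiv ℝ f a‖ ≤ L * ‖y - a‖ :=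
  hΩ.norm_image_sub_le_of_norm_fderiv_le
    (fun z hz => ((hf z hz).fderiv_right (m := 1) le_rfl).differentiableAt one_ne_zero)
    (fun z hz => by rw [← norm_iteratedFDeriv_one, norm_iteratedFDeriv_fderiv]; exact hbound z hz)
    ha hy

theorem Convex.norm_sub_sub_fderiv_le (hΩ : Convex ℝ Ω)
    (hf : ∀ y ∈ Ω, ContDiffAt ℝ 2 f y) (hbound : ∀ y ∈ Ω, ‖iteratedFDeriv ℝ 2 f y‖ ≤ L)
    {a x : E} (ha : a ∈ Ω) (hx : x ∈ Ω) :
    ‖f x - f a - fderiv ℝ f a (x - a)‖ ≤ L * ‖x - a‖ ^ 2 := by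
  have hL : 0 ≤ L := (norm_nonneg _).trans (hbound a ha)
  have hseg : segment ℝ a x ⊆ Ω := hΩ.segment_subset ha hx
  have hderiv : ∀ y ∈ segment ℝ a x, ‖fderiv ℝ f y - fderiv ℝ f a‖ ≤ L * ‖x - a‖ := fun y hy =>
    (hΩ.norm_fderiv_sub_fderiv_le hf hbound ha (hseg hy)).trans <|
      mul_le_mul_of_nonneg_left (norm_sub_le_of_mem_segment hy) hL
  calc ‖f x - f a - fderiv ℝ f a (x - a)‖ ≤ L * ‖x - a‖ * ‖x - a‖ :=
        (convex_segment a x).norm_image_sub_le_of_norm_fderiv_le'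
          (fun y hy => (hf y (hseg hy)).differentiableAt two_ne_zero) hderiv
          (left_mem_segment ℝ a x) (right_mem_segment ℝ a x)
    _ = L * ‖x - a‖ ^ 2 := by ring

end Taylor

theorem Matrix.dotProduct_mulVec_mulVec_le_neg_of_posSemidef {m : Type*} [Fintype m]
    [DecidableEq m] {P J : Matrix m m ℝ} (hP : P.IsSymm)
    (hLMI : (-1 - (1 / 2 : ℝ) • (P * J + Jᵀ * P)).PosSemidef) (v : m → ℝ) :
    v ⬝ᵥ P *ᵥ (J *ᵥ v) ≤ -(v ⬝ᵥ v) := by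
  have hsymm : v ⬝ᵥ (Jᵀ * P) *ᵥ v = v ⬝ᵥ P *ᵥ (J *ᵥ v) := by
    rw [← mulVec_mulVec, dotProduct_mulVec, vecMul_transpose, dotProduct_comm,
      dotProduct_mulVec v P, ← vecMul_transpose, hP.eq]
  have h := hLMI.dotProduct_mulVec_nonneg v
  rw [star_trivial, sub_mulVec, neg_mulVec, one_mulVec, smul_mulVec, add_mulVec,
    dotProduct_sub, dotProduct_neg, dotProduct_smul, dotProduct_add, hsymm,
    ← mulVec_mulVec, smul_eq_mul] at h
  linarith

section EuclideanMatrix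

variable {n : ℕ}

theorem norm_sq_eq_ofLp_dotProduct (x : EuclideanSpace ℝ (Fin n)) :
    ‖x‖ ^ 2 = x.ofLp ⬝ᵥ x.ofLp := by
  rw [← real_inner_self_eq_norm_sq, EuclideanSpace.inner_eq_star_dotProduct, star_trivial]

theorem quadF_eq_dotProduct (P : Matrix (Fin n) (Fin n) ℝ) (x w : EuclideanSpace ℝ (Fin n)) :
    quadF P x w = x.ofLp ⬝ᵥ P *ᵥ w.ofLp := by
  rw [quadF, EuclideanSpace.inner_eq_star_dotProduct, star_trivial, dotProduct_comm]
  rfl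

theorem quadF_sub_right (P : Matrix (Fin n) (Fin n) ℝ) (x w w' : EuclideanSpace ℝ (Fin n)) :
    quadF P x (w - w') = quadF P x w - quadF P x w' := by
  simp only [quadF, map_sub, inner_sub_right]

theorem quadF_le_opNorm_mul (P : Matrix (Fin n) (Fin n) ℝ) (x w : EuclideanSpace ℝ (Fin n)) :
    quadF P x w ≤ opNorm P * ‖x‖ * ‖w‖ :=
  calc quadF P x w ≤ ‖x‖ * ‖Matrix.toEuclideanCLM (𝕜 := ℝ) P w‖ := real_inner_le_norm _ _
    _ ≤ ‖x‖ * (opNorm P * ‖w‖) := by gcongr; exact ContinuousLinearMap.le_opNorm _ _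
    _ = opNorm P * ‖x‖ * ‖w‖ := by ring

theorem toEuclideanLin_jacobianAtZero_apply
    (f : EuclideanSpace ℝ (Fin n) → EuclideanSpace ℝ (Fin n)) (x : EuclideanSpace ℝ (Fin n)) :
    Matrix.toEuclideanLin (jacobianAtZero f) x = fderiv ℝ f 0 x := by
  change _ = (fderiv ℝ f 0).toLinearMap x
  congr 1
  refine (EuclideanSpace.basisFun (Fin n) ℝ).toBasis.ext fun j => ?_
  ext i
  simp [jacobianAtZero, mulVec_single]

theorem quadF_fderiv_le_neg_norm_sq {f : EuclideanSpace ℝ (Fin n) → EuclideanSpace ℝ (Fin n)}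
    {P : Matrix (Fin n) (Fin n) ℝ} (hP : P.IsSymm)
    (hLMI : (-(1 : Matrix (Fin n) (Fin n) ℝ)
      - (1 / 2 : ℝ) • (P * jacobianAtZero f + (jacobianAtZero f)ᵀ * P)).PosSemidef)
    (x : EuclideanSpace ℝ (Fin n)) :
    quadF P x (fderiv ℝ f 0 x) ≤ -‖x‖ ^ 2 := by
  rw [← toEuclideanLin_jacobianAtZero_apply, quadF_eq_dotProduct, norm_sq_eq_ofLp_dotProduct]
  exact dotProduct_mulVec_mulVec_le_neg_of_posSemidef hP hLMI x.ofLp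

end EuclideanMatrix

theorem mul_le_of_lt_of_le_div {t β a c : ℝ} (ht : 0 ≤ t) (hc : 0 ≤ c) (htβ : t < β)
    (hβ : β ≤ a / c) : t * c ≤ a := by
  rcases hc.eq_or_lt with rfl | hc
  · rw [div_zero] at hβ
    linarith
  · calc t * c ≤ β * c := by gcongr
      _ ≤ a := (le_div_iff₀ hc).mp hβ

theorem near_origin_case_general {n : ℕ}
    (Ω U : Set (EuclideanSpace ℝ (Fin n)))
    (hconv : Convex ℝ Ω) (h0 : (0 : EuclideanSpace ℝ (Fin n)) ∈ Ω)
    (hU : IsOpen U) (hΩU : Ω ⊆ U)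
    (f : EuclideanSpace ℝ (Fin n) → EuclideanSpace ℝ (Fin n))
    (hf : ContDiffOn ℝ 2 f U) (hf0 : f 0 = 0)
    (L₂ : ℝ)
    (hD2 : ∀ x ∈ Ω, ‖iteratedFDeriv ℝ 2 f x‖ ≤ L₂)
    (P : Matrix (Fin n) (Fin n) ℝ) (hP : P.IsSymm)
    (hLMI : (-(1 : Matrix (Fin n) (Fin n) ℝ)
      - (1 / 2 : ℝ) • (P * jacobianAtZero f + (jacobianAtZero f)ᵀ * P)).PosSemidef)
    (ε β : ℝ)
    (hβ : β ≤ (1 - ε) / (L₂ * opNorm P)) :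
    ∀ x ∈ Ω, ‖x‖ < β → quadF P x (f x) ≤ -ε * ‖x‖ ^ 2 := by
  intro x hx hxβ
  have hC2 : ∀ y ∈ Ω, ContDiffAt ℝ 2 f y := fun y hy => hf.contDiffAt (hU.mem_nhds (hΩU hy))
  have hlin : quadF P x (fderiv ℝ f 0 x) ≤ -‖x‖ ^ 2 := quadF_fderiv_le_neg_norm_sq hP hLMI x
  have hrem : ‖f x - fderiv ℝ f 0 x‖ ≤ L₂ * ‖x‖ ^ 2 := by
    simpa [hf0] using hconv.norm_sub_sub_fderiv_le hC2 hD2 h0 hx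
  have hsmall : ‖x‖ * (L₂ * opNorm P) ≤ 1 - ε :=
    mul_le_of_lt_of_le_div (norm_nonneg x)
      (mul_nonneg ((norm_nonneg _).trans (hD2 0 h0)) (norm_nonneg _)) hxβ hβ
  calc quadF P x (f x)
      = quadF P x (fderiv ℝ f 0 x) + quadF P x (f x - fderiv ℝ f 0 x) := by
        rw [quadF_sub_right]; ring
    _ ≤ -‖x‖ ^ 2 + opNorm P * ‖x‖ * (L₂ * ‖x‖ ^ 2) :=
        add_le_add hlin <| (quadF_le_opNorm_mul P x _).trans <|
          mul_le_mul_of_nonneg_left hrem (mul_nonneg (norm_nonneg _) (norm_nonneg _))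
    _ = -‖x‖ ^ 2 + ‖x‖ * (L₂ * opNorm P) * ‖x‖ ^ 2 := by ring
    _ ≤ -‖x‖ ^ 2 + (1 - ε) * ‖x‖ ^ 2 := by gcongr
    _ = -ε * ‖x‖ ^ 2 := by ring

/-- near-origin case of the grid-sufficiency theorem.
Let `Ω ⊆ ℝⁿ` be convex with `0 ∈ Ω`, `U ⊇ Ω` open, and `f : U → ℝⁿ` be `C²`
with `f 0 = 0`. Let `L₂ > 0` bound `‖D²f‖` on `Ω`, let `P` be symmetric with
`(1/2)(P·Df(0) + Df(0)ᵀ·P) ⪯ -I`, and let `ε ∈ (0,1)`, `β > 0` satisfy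
`β ≤ (1-ε)/(L₂ ‖P‖)`. Then every `x ∈ Ω` with `‖x‖ < β` satisfies
`xᵀ P f(x) ≤ -ε ‖x‖²`. -/
theorem near_origin_case {n : ℕ}
    (Ω U : Set (EuclideanSpace ℝ (Fin n)))
    (hconv : Convex ℝ Ω) (h0 : (0 : EuclideanSpace ℝ (Fin n)) ∈ Ω)
    (hU : IsOpen U) (hΩU : Ω ⊆ U)
    (f : EuclideanSpace ℝ (Fin n) → EuclideanSpace ℝ (Fin n))
    (hf : ContDiffOn ℝ 2 f U) (hf0 : f 0 = 0)
    (L₂ : ℝ) (hL₂ : 0 < L₂)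
    (hD2 : ∀ x ∈ Ω, ‖iteratedFDeriv ℝ 2 f x‖ ≤ L₂)
    (P : Matrix (Fin n) (Fin n) ℝ) (hP : P.IsSymm)
    (hLMI : (-(1 : Matrix (Fin n) (Fin n) ℝ)
      - (1 / 2 : ℝ) • (P * jacobianAtZero f + (jacobianAtZero f)ᵀ * P)).PosSemidef)
    (ε β : ℝ) (hε0 : 0 < ε) (hε1 : ε < 1) (hβ0 : 0 < β)
    (hβ : β ≤ (1 - ε) / (L₂ * opNorm P)) :
    ∀ x ∈ Ω, ‖x‖ < β → quadF P x (f x) ≤ -ε * ‖x‖ ^ 2 :=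
  near_origin_case_general Ω U hconv h0 hU hΩU f hf hf0 L₂ hD2 P hP hLMI ε β hβ
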